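/- With Φ(v, w, x, y) = (v, ½ Σ α_i (x_i² + y_i²)) as above, the derivative DΦ at a point p = (v, w, x, y) is surjective if and only if the vectors α_i for those indices i with (x_i, y_i) ≠ (0,0) span ℝᵏ. -/

import Mathlib

/-!
`Φ` is the identity on the `v`-factor times the quadratic map
`Q(x, y) = ½ Σ (xᵢ² + yᵢ²) αᵢ`, which ignores `w`. The derivative of `Q` at `(x, y)` is
`(a, b) ↦ Σ (xᵢ aᵢ + yᵢ bᵢ) αᵢ`, whose image is spanned by the vectors `xᵢ αᵢ` and `yᵢ αᵢ`,
that is, by the `αᵢ` with `(xᵢ, yᵢ) ≠ (0, 0)`.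
-/

open Set Submodule

theorem Submodule.span_range_smul_eq_span_image {K M ι : Type*} [DivisionRing K]
    [AddCommGroup M] [Module K M] (c : ι → K) (v : ι → M) :
    span K (range (c • v)) = span K (v '' {i | c i ≠ 0}) := by
  refine le_antisymm (span_le.2 ?_) (span_le.2 ?_)
  · rintro _ ⟨i, rfl⟩
    by_cases hi : c i = 0
    · simp [hi]
    · exact smul_mem _ _ (subset_span ⟨i, hi, rfl⟩)
  · rintro _ ⟨i, hi, rfl⟩
    have hcv : c i • v i ∈ span K (range (c • v)) := subset_span ⟨i, rfl⟩
    simpa [smul_smul, inv_mul_cancel₀ hi] using smul_mem _ (c i)⁻¹ hcv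

theorem Fintype.range_coprod_linearCombination_smul {K M ι : Type*} [Field K]
    [AddCommGroup M] [Module K M] [Fintype ι] (α : ι → M) (x y : ι → K) :
    LinearMap.range ((Fintype.linearCombination K (x • α)).coprod
        (Fintype.linearCombination K (y • α))) =
      span K {a | ∃ i, (x i ≠ 0 ∨ y i ≠ 0) ∧ a = α i} := by
  rw [LinearMap.range_coprod, Fintype.range_linearCombination, Fintype.range_linearCombination,
    span_range_smul_eq_span_image, span_range_smul_eq_span_image, ← span_union, ← image_union]
  congr 1
  ext a
  simp [eq_comm]

section HalfSumSquares

variable {𝕜 M ι : Type*} [RCLike 𝕜] [NormedAddCommGroup M] [NormedSpace 𝕜 M] [Fintype ι]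

theorem hasFDerivAt_half_sum_sq_smul (α : ι → M) (x : ι → 𝕜) :
    HasFDerivAt (fun u : ι → 𝕜 => (1 / 2 : 𝕜) • ∑ i, u i ^ 2 • α i)
      (Fintype.linearCombination 𝕜 (x • α)).toContinuousLinearMap x := by
  have hsq (i : ι) := ((hasFDerivAt_apply (𝕜 := 𝕜) i x).pow 2).smul_const (α i)
  have h := (HasFDerivAt.fun_sum (u := Finset.univ) fun i _ => hsq i).const_smul (1 / 2 : 𝕜)
  refine h.congr_fderiv (ContinuousLinearMap.ext fun u => ?_)
  simp only [one_div, Nat.add_one_sub_one, pow_one, nsmul_eq_mul, Nat.cast_ofNat,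
    Finset.smul_sum, _root_.sum_apply, _root_.smul_apply,
    ContinuousLinearMap.smulRight_apply, ContinuousLinearMap.proj_apply, smul_eq_mul, smul_smul,
    LinearMap.coe_toContinuousLinearMap', Fintype.linearCombination_apply, Pi.smul_apply']
  exact Finset.sum_congr rfl fun i _ => by ring_nf

theorem hasFDerivAt_half_sum_sq_add_sq_smul (α : ι → M) (x y : ι → 𝕜) :
    HasFDerivAt (fun z : (ι → 𝕜) × (ι → 𝕜) => (1 / 2 : 𝕜) • ∑ i, (z.1 i ^ 2 + z.2 i ^ 2) • α i)
      ((Fintype.linearCombination 𝕜 (x • α)).toContinuousLinearMap.coprod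
        (Fintype.linearCombination 𝕜 (y • α)).toContinuousLinearMap) (x, y) := by
  have h := ((hasFDerivAt_half_sum_sq_smul α x).comp (x, y) (hasFDerivAt_fst (𝕜 := 𝕜))).add
    ((hasFDerivAt_half_sum_sq_smul α y).comp (x, y) (hasFDerivAt_snd (𝕜 := 𝕜)))
  refine h.congr_fderiv rfl |>.congr_of_eventuallyEq (Filter.Eventually.of_forall fun z => ?_)
  simp only [Pi.add_apply, Function.comp_apply, add_smul, Finset.sum_add_distrib, smul_add]

end HalfSumSquares

/-- For the local-normal-form moment map `Φ(v,w,x,y) = (v, ½ Σᵢ (xᵢ²+yᵢ²) • αᵢ)`,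
the derivative at `p = (v,w,x,y)` is surjective iff the weights `αᵢ` with
`(xᵢ, yᵢ) ≠ (0,0)` span `ℝᵏ`. -/
theorem normal_form_fderiv_surjective_iff
    {m n k : ℕ} (α : Fin n → (Fin k → ℝ))
    (Φ : ((Fin m → ℝ) × (Fin m → ℝ) × (Fin n → ℝ) × (Fin n → ℝ)) →
        ((Fin m → ℝ) × (Fin k → ℝ)))
    (hΦ : ∀ v w x y, Φ (v, w, x, y)
        = (v, ((1 : ℝ)/2) • ∑ i, (x i ^ 2 + y i ^ 2) • α i))
    (v w : Fin m → ℝ) (x y : Fin n → ℝ) :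
    Function.Surjective (fderiv ℝ Φ (v, w, x, y)) ↔
      Submodule.span ℝ {a | ∃ i : Fin n, (x i ≠ 0 ∨ y i ≠ 0) ∧ a = α i} = ⊤ := by
  have hΦ_eq : Φ = Prod.map id ((fun z : (Fin n → ℝ) × (Fin n → ℝ) =>
      (1 / 2 : ℝ) • ∑ i, (z.1 i ^ 2 + z.2 i ^ 2) • α i) ∘ Prod.snd) := by
    funext ⟨v, w, x, y⟩
    exact hΦ v w x y
  have hderiv := (hasFDerivAt_id v).prodMap (v, w, x, y)
    ((hasFDerivAt_half_sum_sq_add_sq_smul α x y).comp (w, x, y) (hasFDerivAt_snd (𝕜 := ℝ)))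
  rw [← hΦ_eq] at hderiv
  rw [hderiv.fderiv, ContinuousLinearMap.coe_prodMap', Prod.map_surjective,
    ContinuousLinearMap.coe_comp, ContinuousLinearMap.coe_snd',
    Function.Surjective.of_comp_iff _ Prod.snd_surjective,
    ← Fintype.range_coprod_linearCombination_smul, LinearMap.range_eq_top]
  exact and_iff_right Function.surjective_id
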